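/- Let X be a finite set and let a, b, r ⊆ X, with r^c denoting the complement X\r. If Jac(a,r) = Jac(b,r) and Jac(a,r^c) = Jac(b,r^c), then, as integers, (|r^c| − |r|)·(|b∩r| − |a∩r|) = |r^c|·(|b| − |a|). -/
import Mathlib


/-- The Jaccard distance between two finite sets: `|a Δ b| / |a ∪ b|`
(with the convention `0/0 = 0`, so `jac a a = 0`). -/
noncomputable def jac {α : Type*} [DecidableEq α] (a b : Finset α) : ℝ :=
  (((a \ b) ∪ (b \ a)).card : ℝ) / ((a ∪ b).card : ℝ)

lemma symmdiff_card {α : Type*} [DecidableEq α] (a r : Finset α) :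
    ((a \ r) ∪ (r \ a)).card + (a ∩ r).card = (a ∪ r).card := by
  rw [show (a \ r) ∪ (r \ a) = (a ∪ r) \ (a ∩ r) by ext x; simp; tauto]
  exact Finset.card_sdiff_add_card_eq_card Finset.inter_subset_union

/-- From equal Jaccard distances to `r`, cross-multiplied intersection/union identity. -/
lemma jac_key {α : Type*} [DecidableEq α] (a b r : Finset α) (h : jac a r = jac b r) :
    ((a ∩ r).card : ℤ) * ((b ∪ r).card : ℤ) = ((b ∩ r).card : ℤ) * ((a ∪ r).card : ℤ) := by
  by_cases ha : a ∪ r = ∅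
  · obtain ⟨ha', hr⟩ := Finset.union_eq_empty.mp ha
    subst ha' hr
    simp
  by_cases hb : b ∪ r = ∅
  · obtain ⟨hb', hr⟩ := Finset.union_eq_empty.mp hb
    subst hb' hr
    simp
  · have hua : (0 : ℝ) < ((a ∪ r).card : ℝ) := by
      exact_mod_cast Finset.card_pos.mpr (Finset.nonempty_iff_ne_empty.mpr ha)
    have hub : (0 : ℝ) < ((b ∪ r).card : ℝ) := by
      exact_mod_cast Finset.card_pos.mpr (Finset.nonempty_iff_ne_empty.mpr hb)
    unfold jac at h
    rw [div_eq_div_iff hua.ne' hub.ne'] at h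
    have ha2 := symmdiff_card a r
    have hb2 := symmdiff_card b r
    have h' : ((((a \ r) ∪ (r \ a)).card : ℤ)) * ((b ∪ r).card : ℤ)
        = (((b \ r) ∪ (r \ b)).card : ℤ) * ((a ∪ r).card : ℤ) := by exact_mod_cast h
    have ha2' : ((((a \ r) ∪ (r \ a)).card : ℤ)) + ((a ∩ r).card : ℤ) = ((a ∪ r).card : ℤ) := by
      exact_mod_cast ha2
    have hb2' : ((((b \ r) ∪ (r \ b)).card : ℤ)) + ((b ∩ r).card : ℤ) = ((b ∪ r).card : ℤ) := by
      exact_mod_cast hb2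
    nlinarith [h', ha2', hb2']

/-- If `a, b` collide with both `r` and `rᶜ`, then
`(|rᶜ| − |r|)(|b ∩ r| − |a ∩ r|) = |rᶜ|(|b| − |a|)` as integers. -/
theorem stmt9 {α : Type*} [Fintype α] [DecidableEq α]
    (a b r : Finset α)
    (h1 : jac a r = jac b r) (h2 : jac a rᶜ = jac b rᶜ) :
    ((rᶜ.card : ℤ) - (r.card : ℤ)) * (((b ∩ r).card : ℤ) - ((a ∩ r).card : ℤ)) =
      (rᶜ.card : ℤ) * ((b.card : ℤ) - (a.card : ℤ)) := by
  have e1 := jac_key a b r h1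
  have e2 := jac_key a b rᶜ h2
  -- union card identities
  have uar : ((a ∪ r).card : ℤ) + ((a ∩ r).card : ℤ) = (a.card : ℤ) + (r.card : ℤ) := by
    exact_mod_cast Finset.card_union_add_card_inter a r
  have ubr : ((b ∪ r).card : ℤ) + ((b ∩ r).card : ℤ) = (b.card : ℤ) + (r.card : ℤ) := by
    exact_mod_cast Finset.card_union_add_card_inter b r
  have uac : ((a ∪ rᶜ).card : ℤ) + ((a ∩ rᶜ).card : ℤ) = (a.card : ℤ) + (rᶜ.card : ℤ) := by
    exact_mod_cast Finset.card_union_add_card_inter a rᶜ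
  have ubc : ((b ∪ rᶜ).card : ℤ) + ((b ∩ rᶜ).card : ℤ) = (b.card : ℤ) + (rᶜ.card : ℤ) := by
    exact_mod_cast Finset.card_union_add_card_inter b rᶜ
  -- splitting identities
  have sa : ((a ∩ r).card : ℤ) + ((a ∩ rᶜ).card : ℤ) = (a.card : ℤ) := by
    have : (a ∩ rᶜ) = a \ r := by ext x; simp
    rw [this]
    exact_mod_cast Finset.card_inter_add_card_sdiff a r
  have sb : ((b ∩ r).card : ℤ) + ((b ∩ rᶜ).card : ℤ) = (b.card : ℤ) := by
    have : (b ∩ rᶜ) = b \ r := by ext x; simp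
    rw [this]
    exact_mod_cast Finset.card_inter_add_card_sdiff b r
  nlinarith [e1, e2, uar, ubr, uac, ubc, sa, sb]
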